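/- For k ≥ 2, the jewel base simplex S ⊆ ℝ^{k-1} with extreme points -(k/2)e_i (i ∈ [k-1]) and (k/2)(1,…,1) satisfies: (a) S is contained in the ℓ1-ball of radius k(k-1)/2, and (b) the ℓ1-ball of radius k/(2(k-1)) is contained in S. Moreover k/(2(k-1)) is the largest radius r such that the ℓ1-ball of radius r is contained in S. -/
import Mathlib


/-- The jewel base simplex `S = D_{jewel,k}(1) ⊆ ℝ^{k-1}` with extreme points
`-(k/2)eᵢ`, `i ∈ [k-1]`, and `(k/2)(1,…,1)`. -/
def jewelSimplex (k : ℕ) : Set (Fin (k - 1) → ℝ) :=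
  convexHull ℝ
    ((Set.range fun i : Fin (k - 1) =>
        (fun j => if j = i then -((k : ℝ) / 2) else 0 : Fin (k - 1) → ℝ))
      ∪ {fun _ => (k : ℝ) / 2})

/-- (a) `S` is contained in the ℓ¹-ball of radius `k(k-1)/2`; (b) the ℓ¹-ball of
radius `k/(2(k-1))` is contained in `S`; moreover `k/(2(k-1))` is the largest such
radius. -/
theorem stmt_12 (k : ℕ) (hk : 2 ≤ k) :
    (jewelSimplex k ⊆ {x : Fin (k - 1) → ℝ | ∑ j, |x j| ≤ (k : ℝ) * ((k : ℝ) - 1) / 2}) ∧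
    ({x : Fin (k - 1) → ℝ | ∑ j, |x j| ≤ (k : ℝ) / (2 * ((k : ℝ) - 1))} ⊆ jewelSimplex k) ∧
    (∀ r : ℝ, {x : Fin (k - 1) → ℝ | ∑ j, |x j| ≤ r} ⊆ jewelSimplex k →
      r ≤ (k : ℝ) / (2 * ((k : ℝ) - 1))) := by
  have hk1 : 1 ≤ k := by omega
  have hn : ((k - 1 : ℕ) : ℝ) = (k : ℝ) - 1 := by
    rw [Nat.cast_sub hk1]; norm_num
  have hkR : (2 : ℝ) ≤ (k : ℝ) := by exact_mod_cast hk
  have hk0 : (0 : ℝ) < (k : ℝ) := by linarith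
  have hk1R : (0 : ℝ) < (k : ℝ) - 1 := by linarith
  -- abs of the ite defining a vertex
  have habsite : ∀ i j : Fin (k - 1),
      |(if j = i then -((k : ℝ) / 2) else 0)| = if j = i then (k : ℝ) / 2 else 0 := by
    intro i j
    split
    · rw [abs_neg, abs_of_nonneg (by positivity)]
    · exact abs_zero
  refine ⟨?_, ?_, ?_⟩
  · -- (a)
    rw [jewelSimplex]
    apply convexHull_min
    · rintro x (⟨i, rfl⟩ | rfl)
      · simp only [Set.mem_setOf_eq]
        calc ∑ j, |(if j = i then -((k : ℝ) / 2) else 0)|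
            = ∑ j, (if j = i then (k : ℝ) / 2 else 0) := by
              exact Finset.sum_congr rfl fun j _ => habsite i j
          _ = (k : ℝ) / 2 := by rw [Finset.sum_ite_eq']; simp
          _ ≤ (k : ℝ) * ((k : ℝ) - 1) / 2 := by nlinarith
      · simp only [Set.mem_setOf_eq]
        rw [Finset.sum_const, Finset.card_univ, Fintype.card_fin, nsmul_eq_mul, hn,
          abs_of_nonneg (by positivity)]
        ring_nf
        nlinarith
    · intro x hx y hy a b ha hb hab
      simp only [Set.mem_setOf_eq] at *
      have : ∀ j, |(a • x + b • y) j| ≤ a * |x j| + b * |y j| := by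
        intro j
        simp only [Pi.add_apply, Pi.smul_apply, smul_eq_mul]
        calc |a * x j + b * y j| ≤ |a * x j| + |b * y j| := abs_add_le _ _
          _ = a * |x j| + b * |y j| := by
              rw [abs_mul, abs_mul, abs_of_nonneg ha, abs_of_nonneg hb]
      calc ∑ j, |(a • x + b • y) j| ≤ ∑ j, (a * |x j| + b * |y j|) :=
            Finset.sum_le_sum fun j _ => this j
        _ = a * ∑ j, |x j| + b * ∑ j, |y j| := by
            rw [Finset.sum_add_distrib, Finset.mul_sum, Finset.mul_sum]
        _ ≤ a * ((k : ℝ) * ((k : ℝ) - 1) / 2) + b * ((k : ℝ) * ((k : ℝ) - 1) / 2) := by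
            gcongr
        _ = (k : ℝ) * ((k : ℝ) - 1) / 2 := by rw [← add_mul, hab, one_mul]
  · -- (b)
    intro x hx
    simp only [Set.mem_setOf_eq] at hx
    set s : ℝ := ∑ j, x j with hs
    have hsum_abs_nonneg : (0 : ℝ) ≤ ∑ j, |x j| :=
      Finset.sum_nonneg fun j _ => abs_nonneg _
    have habs : |s| ≤ ∑ j, |x j| := Finset.abs_sum_le_sum_abs _ _
    have hx' : ((k : ℝ) - 1) * ∑ j, |x j| ≤ (k : ℝ) / 2 := by
      have h2 : ((k : ℝ) - 1) * ((k : ℝ) / (2 * ((k : ℝ) - 1))) = (k : ℝ) / 2 := by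
        field_simp
      calc ((k : ℝ) - 1) * ∑ j, |x j| ≤ ((k : ℝ) - 1) * ((k : ℝ) / (2 * ((k : ℝ) - 1))) :=
            mul_le_mul_of_nonneg_left hx hk1R.le
        _ = (k : ℝ) / 2 := h2
    have hsge : -((k : ℝ) / 2) ≤ s := by
      have h1 : -s ≤ |s| := neg_le_abs s
      nlinarith
    have key : ∀ i, (k : ℝ) * x i - s ≤ (k : ℝ) / 2 := by
      intro i
      have e1 : s = x i + ∑ j ∈ Finset.univ.erase i, x j :=
        (Finset.add_sum_erase _ _ (Finset.mem_univ i)).symm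
      have e2 : ∑ j, |x j| = |x i| + ∑ j ∈ Finset.univ.erase i, |x j| :=
        (Finset.add_sum_erase _ _ (Finset.mem_univ i)).symm
      have e3 : |∑ j ∈ Finset.univ.erase i, x j| ≤ ∑ j ∈ Finset.univ.erase i, |x j| :=
        Finset.abs_sum_le_sum_abs _ _
      have e4 : -(∑ j ∈ Finset.univ.erase i, x j) ≤ ∑ j ∈ Finset.univ.erase i, |x j| := by
        have := neg_le_abs (∑ j ∈ Finset.univ.erase i, x j); linarith
      have e5 : (0 : ℝ) ≤ ∑ j ∈ Finset.univ.erase i, |x j| :=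
        Finset.sum_nonneg fun j _ => abs_nonneg _
      have e6 : x i ≤ |x i| := le_abs_self _
      have e7 : (0 : ℝ) ≤ |x i| := abs_nonneg _
      nlinarith [hx']
    -- weights and vertices
    set W : Option (Fin (k - 1)) → ℝ := fun o => match o with
      | none => ((k : ℝ) + 2 * s) / (k : ℝ) ^ 2
      | some i => ((k : ℝ) + 2 * s - 2 * (k : ℝ) * x i) / (k : ℝ) ^ 2 with hW
    set z : Option (Fin (k - 1)) → (Fin (k - 1) → ℝ) := fun o => match o with
      | none => fun _ => (k : ℝ) / 2
      | some i => fun j => if j = i then -((k : ℝ) / 2) else 0 with hz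
    have hWnn : ∀ o, 0 ≤ W o := by
      intro o
      match o with
      | none =>
        show 0 ≤ ((k : ℝ) + 2 * s) / (k : ℝ) ^ 2
        apply div_nonneg _ (by positivity)
        linarith
      | some i =>
        show 0 ≤ ((k : ℝ) + 2 * s - 2 * (k : ℝ) * x i) / (k : ℝ) ^ 2
        apply div_nonneg _ (by positivity)
        have := key i
        linarith
    have hWsum : ∑ o : Option (Fin (k - 1)), W o = 1 := by
      rw [Fintype.sum_option]
      have h1 : ∑ i : Fin (k - 1), W (some i)
          = (((k : ℝ) - 1) * ((k : ℝ) + 2 * s) - 2 * (k : ℝ) * s) / (k : ℝ) ^ 2 := by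
        show ∑ i : Fin (k - 1), ((k : ℝ) + 2 * s - 2 * (k : ℝ) * x i) / (k : ℝ) ^ 2 = _
        rw [← Finset.sum_div]
        congr 1
        rw [Finset.sum_sub_distrib, Finset.sum_const, Finset.card_univ, Fintype.card_fin,
          nsmul_eq_mul, hn, ← Finset.mul_sum, ← hs]
      rw [h1]
      show ((k : ℝ) + 2 * s) / (k : ℝ) ^ 2 + _ = 1
      field_simp
      ring
    have hzmem : ∀ o, z o ∈ ((Set.range fun i : Fin (k - 1) =>
        (fun j => if j = i then -((k : ℝ) / 2) else 0 : Fin (k - 1) → ℝ))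
      ∪ {fun _ => (k : ℝ) / 2}) := by
      intro o
      match o with
      | none => exact Set.mem_union_right _ rfl
      | some i => exact Set.mem_union_left _ ⟨i, rfl⟩
    have hxeq : x = ∑ o : Option (Fin (k - 1)), W o • z o := by
      funext j
      rw [Finset.sum_apply]
      simp only [Pi.smul_apply, smul_eq_mul]
      rw [Fintype.sum_option]
      have h2 : ∀ i : Fin (k - 1), W (some i) * z (some i) j
          = if j = i then W (some i) * (-((k : ℝ) / 2)) else 0 := by
        intro i
        show W (some i) * (if j = i then -((k : ℝ) / 2) else 0) = _
        split <;> simp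
      rw [Finset.sum_congr rfl fun i _ => h2 i, Finset.sum_ite_eq]
      simp only [Finset.mem_univ, if_true]
      show x j = ((k : ℝ) + 2 * s) / (k : ℝ) ^ 2 * ((k : ℝ) / 2)
        + ((k : ℝ) + 2 * s - 2 * (k : ℝ) * x j) / (k : ℝ) ^ 2 * (-((k : ℝ) / 2))
      field_simp
      ring
    rw [jewelSimplex, hxeq]
    exact (convex_convexHull ℝ _).sum_mem (fun o _ => hWnn o) hWsum
      (fun o _ => subset_convexHull ℝ _ (hzmem o))
  · -- maximality
    intro r hr
    have hpos : (0 : ℝ) < (k : ℝ) / (2 * ((k : ℝ) - 1)) := by positivity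
    by_cases hr0 : r ≤ 0
    · linarith
    push_neg at hr0
    have h0lt : 0 < k - 1 := by omega
    set i0 : Fin (k - 1) := ⟨0, h0lt⟩ with hi0
    have hH : jewelSimplex k ⊆
        {x : Fin (k - 1) → ℝ | (k : ℝ) * x i0 - ∑ j, x j ≤ (k : ℝ) / 2} := by
      rw [jewelSimplex]
      apply convexHull_min
      · rintro x (⟨i, rfl⟩ | rfl)
        · simp only [Set.mem_setOf_eq]
          rw [Finset.sum_ite_eq']
          simp only [Finset.mem_univ, if_true]
          by_cases h : i0 = i
          · rw [if_pos h]; nlinarith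
          · rw [if_neg h]; nlinarith
        · simp only [Set.mem_setOf_eq]
          rw [Finset.sum_const, Finset.card_univ, Fintype.card_fin, nsmul_eq_mul, hn]
          nlinarith
      · intro x hx y hy a b ha hb hab
        simp only [Set.mem_setOf_eq] at *
        have hsum : ∑ j, (a • x + b • y) j = a * ∑ j, x j + b * ∑ j, y j := by
          simp only [Pi.add_apply, Pi.smul_apply, smul_eq_mul]
          rw [Finset.sum_add_distrib, Finset.mul_sum, Finset.mul_sum]
        simp only [Pi.add_apply, Pi.smul_apply, smul_eq_mul] at hsum ⊢
        rw [hsum]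
        nlinarith
    set y : Fin (k - 1) → ℝ := fun j => if j = i0 then r else 0 with hy
    have hymem : y ∈ {x : Fin (k - 1) → ℝ | ∑ j, |x j| ≤ r} := by
      simp only [Set.mem_setOf_eq, hy]
      have : ∀ j : Fin (k - 1), |(if j = i0 then r else 0)| = if j = i0 then r else 0 := by
        intro j; split
        · exact abs_of_pos hr0
        · exact abs_zero
      rw [Finset.sum_congr rfl fun j _ => this j, Finset.sum_ite_eq']
      simp
    have hfin := hH (hr hymem)
    simp only [Set.mem_setOf_eq, hy] at hfin
    rw [Finset.sum_ite_eq'] at hfin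
    simp only [Finset.mem_univ, if_true] at hfin
    rw [le_div_iff₀ (by positivity)]
    nlinarith
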